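/- arXiv:1904.12988 — 7 statements merged into one kernel-verified Lean document; each statement's English description precedes it below -/
import Mathlib

section
/- In the tandem fluid queue setting, let σ : [0,∞) → I be an arbitrary switching signal and let q = (q1, q2) : [0,∞) → ℝ² be locally Lipschitz with (q1(0), q2(0)) ∈ Q̃ = [q1low, ∞) × [q2low, q2up], such that for almost every t ≥ 0 the function q is differentiable at t with q1'(t) = a − f12(σ(t), q(t)) and q2'(t) = f12(σ(t), q(t)) − f2(σ(t), q(t)). Then (q1(t), q2(t)) ∈ Q̃ for every t ≥ 0. -/
open MeasureTheory Filter Set Topology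

lemma unifLocLip (f : ℝ → ℝ) (hf : LocallyLipschitz f) (s t : ℝ) :
    ∃ K δ : ℝ, 0 < δ ∧ 0 ≤ K ∧
      ∀ x ∈ Set.Icc s t, ∀ z : ℝ, |z - x| < δ → |f z - f x| ≤ K * |z - x| := by
  choose K U hU hlip using hf
  choose r hr hball using fun x => Metric.mem_nhds_iff.mp (hU x)
  rcases Set.eq_empty_or_nonempty (Set.Icc s t) with he | hne
  · exact ⟨0, 1, one_pos, le_refl 0, by simp [he]⟩
  obtain ⟨T, hT⟩ := isCompact_Icc.elim_finite_subcover
    (fun x : ℝ => Metric.ball x (r x / 2)) (fun x => Metric.isOpen_ball)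
    (fun y hy => Set.mem_iUnion.mpr ⟨y, by simp [Metric.mem_ball, half_pos (hr y)]⟩)
  have hTne : T.Nonempty := by
    obtain ⟨y, hy⟩ := hne
    obtain ⟨i, hiT, -⟩ := Set.mem_iUnion₂.mp (hT hy)
    exact ⟨i, hiT⟩
  refine ⟨T.sup' hTne (fun i => (K i : ℝ)), T.inf' hTne (fun i => r i / 2), ?_, ?_, ?_⟩
  · exact (Finset.lt_inf'_iff hTne).mpr fun i _ => half_pos (hr i)
  · obtain ⟨i, hi⟩ := hTne
    exact le_trans (K i).coe_nonneg (Finset.le_sup' (fun j => ((K j : ℝ))) hi)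
  · intro x hx z hz
    obtain ⟨i, hiT, hxi⟩ := Set.mem_iUnion₂.mp (hT hx)
    have hxU : x ∈ Metric.ball i (r i) := by
      have : dist x i < r i / 2 := hxi
      exact Metric.mem_ball.mpr (this.trans (half_lt_self (hr i)))
    have hzU : z ∈ Metric.ball i (r i) := by
      have h1 : dist z x < T.inf' hTne (fun i => r i / 2) := by rwa [Real.dist_eq]
      have h2 : T.inf' hTne (fun i => r i / 2) ≤ r i / 2 := Finset.inf'_le _ hiT
      have h3 : dist x i < r i / 2 := hxi
      have := dist_triangle z x i
      exact Metric.mem_ball.mpr (by linarith)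
    have hl : LipschitzOnWith (K i) f (Metric.ball i (r i)) := (hlip i).mono (hball i)
    have := lipschitzOnWith_iff_dist_le_mul.mp hl z hzU x hxU
    rw [Real.dist_eq, Real.dist_eq] at this
    refine this.trans (mul_le_mul_of_nonneg_right ?_ (abs_nonneg _))
    exact Finset.le_sup' (fun i => (K i : ℝ)) hiT

lemma mono_of_ae_deriv_nonneg (f : ℝ → ℝ) (s t : ℝ) (hst : s ≤ t)
    (hcont : Continuous f)
    (K δ : ℝ) (hδ : 0 < δ) (hK0 : 0 ≤ K)
    (hK : ∀ x ∈ Set.Icc s t, ∀ z : ℝ, |z - x| < δ → |f z - f x| ≤ K * |z - x|)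
    (N : Set ℝ) (hN : volume N = 0)
    (hd : ∀ u ∈ Set.Ico s t, u ∉ N → ∃ g, HasDerivAt f g u ∧ 0 ≤ g) :
    f s ≤ f t := by
  classical
  rcases eq_or_lt_of_le hst with rfl | hst'
  · exact le_refl _
  -- main estimate
  have main : ∀ ε : ℝ, 0 < ε → f s ≤ f t + ε * (K + 1) + ε * (t - s) := by
    intro ε hε
    obtain ⟨U, hNU, hUopen, hUvol⟩ := Set.exists_isOpen_lt_of_lt N (ENNReal.ofReal ε)
      (by rw [hN]; exact ENNReal.ofReal_pos.mpr hε)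
    have hUfin : volume U ≠ ⊤ := (hUvol.trans_le le_top).ne
    set ψ : ℝ → ℝ := fun u => (volume (U ∩ Set.Ioc s u)).toReal with hψ
    have hfin : ∀ u, volume (U ∩ Set.Ioc s u) ≠ ⊤ :=
      fun u => ((measure_mono Set.inter_subset_left).trans_lt (hUvol.trans_le le_top)).ne
    have ψadd : ∀ u v : ℝ, s ≤ u → u ≤ v →
        ψ v = ψ u + (volume (U ∩ Set.Ioc u v)).toReal := by
      intro u v hsu huv
      have hun : Set.Ioc s u ∪ Set.Ioc u v = Set.Ioc s v := Set.Ioc_union_Ioc_eq_Ioc hsu huv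
      have hdisj : Disjoint (U ∩ Set.Ioc s u) (U ∩ Set.Ioc u v) := by
        refine Set.disjoint_left.mpr ?_
        rintro x ⟨-, hx1⟩ ⟨-, hx2⟩
        exact absurd hx2.1 (not_lt.mpr hx1.2)
      have hmeas : MeasurableSet (U ∩ Set.Ioc u v) :=
        (hUopen.measurableSet.inter measurableSet_Ioc)
      have heq : U ∩ Set.Ioc s v = (U ∩ Set.Ioc s u) ∪ (U ∩ Set.Ioc u v) := by
        rw [← Set.inter_union_distrib_left, hun]
      rw [hψ]
      simp only
      rw [heq, measure_union hdisj hmeas, ENNReal.toReal_add (hfin u)]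
      exact ((measure_mono Set.inter_subset_left).trans_lt (hUvol.trans_le le_top)).ne
    have ψmono : ∀ u v : ℝ, u ≤ v → ψ u ≤ ψ v := by
      intro u v huv
      exact ENNReal.toReal_mono (hfin v)
        (measure_mono (Set.inter_subset_inter_right _ (Set.Ioc_subset_Ioc_right huv)))
    have ψslope : ∀ u v : ℝ, s ≤ u → u ≤ v → ψ v - ψ u ≤ v - u := by
      intro u v hsu huv
      rw [ψadd u v hsu huv]
      have h1 : volume (U ∩ Set.Ioc u v) ≤ volume (Set.Ioc u v) :=
        measure_mono Set.inter_subset_right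
      have h2 : (volume (U ∩ Set.Ioc u v)).toReal ≤ (volume (Set.Ioc u v)).toReal :=
        ENNReal.toReal_mono (by simp [Real.volume_Ioc]) h1
      rw [Real.volume_Ioc, ENNReal.toReal_ofReal (by linarith : (0:ℝ) ≤ v - u)] at h2
      linarith
    have ψcont : ContinuousOn ψ (Set.Ici s) := by
      have hL : LipschitzOnWith 1 ψ (Set.Ici s) := by
        rw [lipschitzOnWith_iff_dist_le_mul]
        intro u hu v hv
        simp only [NNReal.coe_one, one_mul]
        rcases le_total u v with h | h
        · have h1 := ψslope u v hu h
          have h2 := ψmono u v h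
          rw [Real.dist_eq, Real.dist_eq, abs_of_nonpos (by linarith : ψ u - ψ v ≤ 0),
            abs_of_nonpos (by linarith : u - v ≤ 0)]
          linarith
        · have h1 := ψslope v u hv h
          have h2 := ψmono v u h
          rw [Real.dist_eq, Real.dist_eq, abs_of_nonneg (by linarith : (0:ℝ) ≤ ψ u - ψ v),
            abs_of_nonneg (by linarith : (0:ℝ) ≤ u - v)]
          linarith
      exact hL.continuousOn
    -- now the fencing argument
    set F : ℝ → ℝ := fun u => -(f u + (K + 1) * ψ u) with hF
    set F' : ℝ → ℝ := fun x => if x ∈ U then (-1 : ℝ) else 0 with hF'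
    have key : ∀ ⦃x⦄, x ∈ Set.Icc s t → F x ≤ F s + ε * (x - s) := by
      refine image_le_of_liminf_slope_right_lt_deriv_boundary'
        (f := F) (f' := F') (B := fun x => F s + ε * (x - s)) (B' := fun _ => ε)
        ?_ ?_ ?_ ?_ ?_ ?_
      · exact (hcont.continuousOn.add
          (continuousOn_const.mul (ψcont.mono Set.Icc_subset_Ici_self))).neg
      · intro x hx r hr
        by_cases hxU : x ∈ U
        · have hrx : (-1 : ℝ) < r := by simpa [hF', hxU] using hr
          obtain ⟨δ', hδ', hball⟩ := Metric.isOpen_iff.mp hUopen x hxU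
          have hev : ∀ᶠ z in 𝓝[>] x, z ∈ Set.Ioo x (x + min δ δ') := by
            refine Ioo_mem_nhdsGT_of_mem ⟨le_refl x, ?_⟩
            simp [hδ, hδ']
          refine (hev.mono ?_).frequently
          intro z hz
          have hzx : 0 < z - x := by linarith [hz.1]
          have hzδ : z - x < min δ δ' := by linarith [hz.2]
          have hIoc : Set.Ioc x z ⊆ U := by
            intro y hy
            apply hball
            rw [Metric.mem_ball, Real.dist_eq, abs_of_pos (by linarith [hy.1] : (0:ℝ) < y - x)]
            have h1 := hy.2
            have h2 := lt_of_lt_of_le hzδ (min_le_right δ δ')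
            linarith
          have hψeq : ψ z - ψ x = z - x := by
            rw [ψadd x z hx.1 (by linarith : x ≤ z),
              Set.inter_eq_self_of_subset_right hIoc, Real.volume_Ioc,
              ENNReal.toReal_ofReal (by linarith : (0:ℝ) ≤ z - x)]
            ring
          have hfb : |f z - f x| ≤ K * |z - x| := by
            apply hK x (Set.Ico_subset_Icc_self hx) z
            rw [abs_of_pos hzx]
            exact lt_of_lt_of_le hzδ (min_le_left δ δ')
          have hfb' : -(K * (z - x)) ≤ f z - f x := by
            rw [abs_of_pos hzx] at hfb
            cases' abs_le.mp hfb with h1 h2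
            linarith
          have hsl : slope F x z ≤ -1 := by
            rw [slope_def_field, div_le_iff₀ hzx]
            have hFe : F z - F x = -(f z - f x) - (K + 1) * (ψ z - ψ x) := by
              rw [hF]; ring
            rw [hFe, hψeq]
            nlinarith
          linarith
        · have hxN : x ∉ N := fun h => hxU (hNU h)
          obtain ⟨g, hg, hg0⟩ := hd x hx hxN
          have hrx : (0 : ℝ) < r := by simpa [hF', hxU] using hr
          have hslope : Tendsto (slope f x) (𝓝[>] x) (𝓝 g) :=
            (hasDerivAt_iff_tendsto_slope.mp hg).mono_left
              (nhdsWithin_mono x fun z hz => ne_of_gt hz)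
          have hev1 : ∀ᶠ z in 𝓝[>] x, g - r < slope f x z :=
            hslope (Ioi_mem_nhds (by linarith))
          have hev2 : ∀ᶠ z in 𝓝[>] x, x < z := eventually_mem_nhdsWithin
          refine ((hev1.and hev2).mono ?_).frequently
          rintro z ⟨h1, h2⟩
          have hzx : 0 < z - x := by linarith
          have hψ0 : 0 ≤ ψ z - ψ x := by linarith [ψmono x z h2.le]
          have hsl : slope F x z ≤ -slope f x z := by
            rw [slope_def_field, div_le_iff₀ hzx]
            have hfz : -slope f x z * (z - x) = -(f z - f x) := by
              rw [slope_def_field]; field_simp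
            rw [hfz]
            have hFe : F z - F x = -(f z - f x) - (K + 1) * (ψ z - ψ x) := by
              rw [hF]; ring
            rw [hFe]
            nlinarith
          have h3 : -slope f x z < r - g := by linarith
          have h4 : slope F x z < r - g := lt_of_le_of_lt hsl h3
          linarith
      · simp
      · exact (continuousOn_const.add (continuousOn_const.mul
          (continuousOn_id.sub continuousOn_const)))
      · intro x _
        have : HasDerivAt (fun x : ℝ => F s + ε * (x - s)) ε x := by
          simpa using (((hasDerivAt_id x).sub_const s).const_mul ε).const_add (F s)
        exact this.hasDerivWithinAt
      · intro x hx hFB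
        rw [hF']
        simp only
        split_ifs <;> linarith
    have hkt := key (Set.right_mem_Icc.mpr hst)
    have hψs : ψ s = 0 := by simp [hψ]
    have hψt : ψ t ≤ ε := by
      have h1 : (volume (U ∩ Set.Ioc s t)).toReal ≤ (volume U).toReal :=
        ENNReal.toReal_mono hUfin (measure_mono Set.inter_subset_left)
      have h2 : (volume U).toReal < ε := by
        have h3 := ENNReal.toReal_strict_mono (by simp) hUvol
        rwa [ENNReal.toReal_ofReal hε.le] at h3
      exact le_of_lt (lt_of_le_of_lt h1 h2)
    rw [hF] at hkt
    simp only [hψs, mul_zero, add_zero] at hkt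
    have h5 : (K + 1) * ψ t ≤ (K + 1) * ε :=
      mul_le_mul_of_nonneg_left hψt (by linarith)
    nlinarith
  refine le_of_forall_pos_le_add ?_
  intro ε' hε'
  have hc : 0 < K + 1 + (t - s) := by linarith
  have hm := main (ε' / (K + 1 + (t - s))) (div_pos hε' hc)
  have heq : ε' / (K + 1 + (t - s)) * (K + 1) + ε' / (K + 1 + (t - s)) * (t - s) = ε' := by
    field_simp
  linarith

lemma barrier_lower (f : ℝ → ℝ) (c : ℝ) (hf : LocallyLipschitz f)
    (N : Set ℝ) (hN : volume N = 0)
    (hd : ∀ u, 0 ≤ u → u ∉ N → f u ≤ c → ∃ g, HasDerivAt f g u ∧ 0 ≤ g)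
    (h0 : c ≤ f 0) : ∀ t, 0 ≤ t → c ≤ f t := by
  intro t ht
  by_contra hft
  push_neg at hft
  have hcont := hf.continuous
  have ht' : 0 < t := by
    rcases eq_or_lt_of_le ht with rfl | h
    · exact absurd h0 (not_le.mpr hft)
    · exact h
  set S := Set.Icc 0 t ∩ f ⁻¹' Set.Ici c with hS
  have hSne : S.Nonempty := ⟨0, ⟨le_refl 0, ht⟩, h0⟩
  have hSbdd : BddAbove S := ⟨t, fun u hu => hu.1.2⟩
  have hSclosed : IsClosed S := isClosed_Icc.inter (isClosed_Ici.preimage hcont)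
  set s := sSup S with hs
  have hsmem : s ∈ S := hSclosed.csSup_mem hSne hSbdd
  have hs0 : 0 ≤ s := hsmem.1.1
  have hst : s ≤ t := hsmem.1.2
  have hfs : c ≤ f s := hsmem.2
  have hslt : s < t := by
    refine lt_of_le_of_ne hst fun h => absurd (h ▸ hfs) (not_le.mpr hft)
  have hlt : ∀ u, s < u → u ≤ t → f u < c := by
    intro u h1 h2
    by_contra hcu
    push_neg at hcu
    have : u ∈ S := ⟨⟨by linarith, h2⟩, hcu⟩
    exact absurd (le_csSup hSbdd this) (not_le.mpr h1)
  -- pick s' ∈ (s, t) with f t < f s'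
  obtain ⟨δ, hδpos, hδ⟩ := Metric.continuousAt_iff.mp (hcont.continuousAt (x := s))
    (c - f t) (by linarith)
  set s' := min (s + δ / 2) ((s + t) / 2) with hs'
  have hss' : s < s' := by
    apply lt_min <;> linarith
  have hs't : s' < t := by
    apply lt_of_le_of_lt (min_le_right _ _); linarith
  have hdist : dist s' s < δ := by
    rw [Real.dist_eq, abs_of_pos (by linarith : (0:ℝ) < s' - s)]
    have : s' ≤ s + δ / 2 := min_le_left _ _
    linarith
  have hfs' : f t < f s' := by
    have := hδ hdist
    rw [Real.dist_eq] at this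
    have h2 := abs_lt.mp this
    linarith
  obtain ⟨K, δ', hδ', hK0, hK⟩ := unifLocLip f hf s' t
  have : f s' ≤ f t := by
    apply mono_of_ae_deriv_nonneg f s' t hs't.le hcont K δ' hδ' hK0 hK N hN
    intro u hu hun
    exact hd u (by linarith [hu.1]) hun (le_of_lt (hlt u (lt_of_lt_of_le hss' hu.1) hu.2.le))
  linarith

lemma barrier_upper (f : ℝ → ℝ) (c : ℝ) (hf : LocallyLipschitz f)
    (N : Set ℝ) (hN : volume N = 0)
    (hd : ∀ u, 0 ≤ u → u ∉ N → c ≤ f u → ∃ g, HasDerivAt f g u ∧ g ≤ 0)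
    (h0 : f 0 ≤ c) : ∀ t, 0 ≤ t → f t ≤ c := by
  have hneg : LocallyLipschitz (fun u => -f u) := by
    have h1 : LipschitzWith 1 (fun x : ℝ => -x) := LipschitzWith.id.neg
    exact h1.locallyLipschitz.comp hf
  have := barrier_lower (fun u => -f u) (-c) hneg N hN ?_ (by simpa using h0)
  · intro t ht
    have h := this t ht
    simpa using h
  · intro u hu hun hle
    obtain ⟨g, hg, hg0⟩ := hd u hu hun (by simpa using neg_le_neg hle)
    exact ⟨-g, hg.neg, by linarith⟩

open MeasureTheory Filter

/-- Proposition 1 (tandem fluid queue): the set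
`Q̃ = [q1low, ∞) × [q2low, q2up]` is invariant for the tandem queue dynamics
`q̇1 = a - f12(σ(t), q)`, `q̇2 = f12(σ(t), q) - f2(σ(t), q)`
under an arbitrary switching signal `σ`, where
`f12 i (q1,q2) = min (v q1) (min (c1 i) (w (θ - q2)))` and
`f2 i (q1,q2) = min (v q2) (c2 i)`. -/
theorem tandem_invariant_set
    {I : Type*} [Fintype I] [Nonempty I]
    (v w θ : ℝ) (hv : 0 < v) (hw : 0 < w) (hθ : 0 < θ)
    (c1 c2 : I → ℝ) (hc1 : ∀ i, 0 < c1 i) (hc2 : ∀ i, 0 < c2 i)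
    (cmax c1min c2min : ℝ)
    (hcmax : cmax = Finset.univ.sup' Finset.univ_nonempty (fun i => max (c1 i) (c2 i)))
    (hc1min : c1min = Finset.univ.inf' Finset.univ_nonempty c1)
    (hc2min : c2min = Finset.univ.inf' Finset.univ_nonempty c2)
    (hcap : cmax ≤ v * w * θ / (v + w))
    (a : ℝ) (ha : 0 ≤ a)
    (q1low q2low q2up : ℝ)
    (hq1low : q1low = min (a / v) (cmax / v))
    (hq2low : q2low = min q1low (c1min / v))
    (hq2up : q2up = θ - c2min / w)
    (σ : ℝ → I) (q1 q2 : ℝ → ℝ)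
    (hlip : LocallyLipschitz (fun t : ℝ => (q1 t, q2 t)))
    (h0 : q1low ≤ q1 0 ∧ q2low ≤ q2 0 ∧ q2 0 ≤ q2up)
    (hdyn : ∀ᵐ t ∂(volume.restrict (Set.Ici (0 : ℝ))),
      HasDerivAt q1
        (a - min (v * q1 t) (min (c1 (σ t)) (w * (θ - q2 t)))) t ∧
      HasDerivAt q2
        (min (v * q1 t) (min (c1 (σ t)) (w * (θ - q2 t)))
          - min (v * q2 t) (c2 (σ t))) t) :
    ∀ t : ℝ, 0 ≤ t → q1low ≤ q1 t ∧ q2low ≤ q2 t ∧ q2 t ≤ q2up := by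
  classical
  obtain ⟨h01, h02, h03⟩ := h0
  have hvw : 0 < v + w := by linarith
  obtain ⟨i0⟩ := ‹Nonempty I›
  have hle_sup : ∀ i : I, max (c1 i) (c2 i) ≤ cmax := by
    intro i; rw [hcmax]
    exact Finset.le_sup' (fun i => max (c1 i) (c2 i)) (Finset.mem_univ i)
  have hc1min_le : ∀ i : I, c1min ≤ c1 i := by
    intro i; rw [hc1min]; exact Finset.inf'_le _ (Finset.mem_univ i)
  have hc2min_le : ∀ i : I, c2min ≤ c2 i := by
    intro i; rw [hc2min]; exact Finset.inf'_le _ (Finset.mem_univ i)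
  have hc2min_cmax : c2min ≤ cmax :=
    le_trans (hc2min_le i0) (le_trans (le_max_right _ _) (hle_sup i0))
  have hcmax_pos : 0 < cmax := lt_of_lt_of_le (hc1 i0)
    (le_trans (le_max_left _ _) (hle_sup i0))
  -- Lipschitz of the coordinates
  have hlip1 : LocallyLipschitz q1 := by
    have h1 : LipschitzWith 1 (Prod.fst : ℝ × ℝ → ℝ) := LipschitzWith.prod_fst
    exact h1.locallyLipschitz.comp hlip
  have hlip2 : LocallyLipschitz q2 := by
    have h1 : LipschitzWith 1 (Prod.snd : ℝ × ℝ → ℝ) := LipschitzWith.prod_snd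
    exact h1.locallyLipschitz.comp hlip
  -- extract the null set
  have hdyn' : ∀ᵐ u ∂(volume : Measure ℝ), u ∈ Set.Ici (0:ℝ) →
      (HasDerivAt q1 (a - min (v * q1 u) (min (c1 (σ u)) (w * (θ - q2 u)))) u ∧
       HasDerivAt q2 (min (v * q1 u) (min (c1 (σ u)) (w * (θ - q2 u)))
          - min (v * q2 u) (c2 (σ u))) u) :=
    (ae_restrict_iff' measurableSet_Ici).mp hdyn
  set N : Set ℝ := {u : ℝ | ¬ (u ∈ Set.Ici (0:ℝ) →
      (HasDerivAt q1 (a - min (v * q1 u) (min (c1 (σ u)) (w * (θ - q2 u)))) u ∧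
       HasDerivAt q2 (min (v * q1 u) (min (c1 (σ u)) (w * (θ - q2 u)))
          - min (v * q2 u) (c2 (σ u))) u)) } with hNdef
  have hN : volume N = 0 := by rw [hNdef]; rw [ae_iff] at hdyn'; exact hdyn'
  have hNP : ∀ u : ℝ, 0 ≤ u → u ∉ N →
      (HasDerivAt q1 (a - min (v * q1 u) (min (c1 (σ u)) (w * (θ - q2 u)))) u ∧
       HasDerivAt q2 (min (v * q1 u) (min (c1 (σ u)) (w * (θ - q2 u)))
          - min (v * q2 u) (c2 (σ u))) u) := by
    intro u hu hun
    have := not_not.mp hun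
    exact this hu
  -- arithmetic facts
  have hkey : cmax * (v + w) ≤ v * w * θ := (le_div_iff₀ hvw).mp hcap
  -- Step 1 : q1low ≤ q1 t
  have step1 : ∀ t, 0 ≤ t → q1low ≤ q1 t := by
    apply barrier_lower q1 q1low hlip1 N hN _ h01
    intro u hu hun hle
    obtain ⟨hd1, -⟩ := hNP u hu hun
    refine ⟨_, hd1, ?_⟩
    have hmin : min (v * q1 u) (min (c1 (σ u)) (w * (θ - q2 u))) ≤ v * q1 u :=
      min_le_left _ _
    have h1 : v * q1 u ≤ v * q1low := mul_le_mul_of_nonneg_left hle hv.le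
    have h2 : q1low * v ≤ a := by
      have h3 : q1low ≤ a / v := hq1low ▸ min_le_left _ _
      exact (le_div_iff₀ hv).mp h3
    nlinarith
  -- Step 2 : q2 t ≤ q2up
  have step2 : ∀ t, 0 ≤ t → q2 t ≤ q2up := by
    apply barrier_upper q2 q2up hlip2 N hN _ h03
    intro u hu hun hge
    obtain ⟨-, hd2⟩ := hNP u hu hun
    refine ⟨_, hd2, ?_⟩
    have h12 : min (v * q1 u) (min (c1 (σ u)) (w * (θ - q2 u))) ≤ w * (θ - q2 u) :=
      le_trans (min_le_right _ _) (min_le_right _ _)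
    have hwc : w * (c2min / w) = c2min := by field_simp
    have hwθ : w * (θ - q2 u) ≤ c2min := by
      rw [hq2up] at hge
      have h1 : θ - q2 u ≤ c2min / w := by linarith
      have h2 := mul_le_mul_of_nonneg_left h1 hw.le
      rwa [hwc] at h2
    have hc2u : c2min ≤ v * q2up := by
      rw [hq2up, mul_sub]
      have e : v * (c2min / w) = v * c2min / w := (mul_div_assoc v c2min w).symm
      rw [e]
      have h1 : v * c2min / w ≤ v * θ - c2min := by
        rw [div_le_iff₀ hw]
        nlinarith [hc2min_cmax, hkey]
      linarith
    have hf2 : c2min ≤ min (v * q2 u) (c2 (σ u)) := by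
      refine le_min ?_ (hc2min_le _)
      have : v * q2up ≤ v * q2 u := mul_le_mul_of_nonneg_left hge hv.le
      linarith
    have hf2' := le_trans hf2 (le_refl _)
    linarith [hf2]
  -- Step 3 : q2low ≤ q2 t
  have step3 : ∀ t, 0 ≤ t → q2low ≤ q2 t := by
    apply barrier_lower q2 q2low hlip2 N hN _ h02
    intro u hu hun hle
    obtain ⟨-, hd2⟩ := hNP u hu hun
    refine ⟨_, hd2, ?_⟩
    have hq1u := step1 u hu
    have hf2 : min (v * q2 u) (c2 (σ u)) ≤ v * q2 u := min_le_left _ _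
    have h12 : v * q2 u ≤ min (v * q1 u) (min (c1 (σ u)) (w * (θ - q2 u))) := by
      refine le_min ?_ (le_min ?_ ?_)
      · have h1 : q2 u ≤ q1 u :=
          le_trans hle (le_trans (hq2low ▸ min_le_left _ _) hq1u)
        exact mul_le_mul_of_nonneg_left h1 hv.le
      · have h1 : q2 u ≤ c1min / v := le_trans hle (hq2low ▸ min_le_right _ _)
        have h2 : v * q2 u ≤ v * (c1min / v) := mul_le_mul_of_nonneg_left h1 hv.le
        have h3 : v * (c1min / v) = c1min := by field_simp
        rw [h3] at h2
        exact le_trans h2 (hc1min_le _)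
      · -- v * q2 u ≤ w * (θ - q2 u)
        have h1 : q2 u ≤ cmax / v :=
          le_trans hle (le_trans (hq2low ▸ min_le_left _ _) (hq1low ▸ min_le_right _ _))
        have h2 : q2 u * v ≤ cmax := (le_div_iff₀ hv).mp h1
        have h4 : q2 u * v * (v + w) ≤ cmax * (v + w) :=
          mul_le_mul_of_nonneg_right h2 hvw.le
        have h5 : v * (q2 u * (v + w)) ≤ v * (w * θ) := by nlinarith [h4, hkey]
        have h6 : q2 u * (v + w) ≤ w * θ := le_of_mul_le_mul_left h5 hv
        nlinarith [h6]
    linarith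
  exact fun t ht => ⟨step1 t ht, step3 t ht, step2 t ht⟩
end

section
/- In the tandem fluid queue setting, for every mode i ∈ I and every q1 ≥ q1low, min(v·q1, c1(i), w·(θ − q2low)) ≥ min(v·q2low, c2(i)); equivalently, the downstream drift f12(i, (q1, q2low)) − f2(i, (q1, q2low)) is nonnegative on the lower q2-boundary of the invariant set. -/
/-- Second boundary inequality in the proof of Proposition 1 (tandem fluid queue):
on the lower `q2`-boundary `q2 = q2low` of the invariant set, the downstream drift
`f12(i, (q1, q2low)) - f2(i, (q1, q2low))` is nonnegative for every mode `i` and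
every `q1 ≥ q1low`. -/
theorem tandem_lower_q2_boundary
    {I : Type*} [Fintype I] [Nonempty I]
    (v w θ : ℝ) (hv : 0 < v) (hw : 0 < w) (hθ : 0 < θ)
    (c1 c2 : I → ℝ) (hc1 : ∀ i, 0 < c1 i) (hc2 : ∀ i, 0 < c2 i)
    (cmax c1min c2min : ℝ)
    (hcmax : cmax = Finset.univ.sup' Finset.univ_nonempty (fun i => max (c1 i) (c2 i)))
    (hc1min : c1min = Finset.univ.inf' Finset.univ_nonempty c1)
    (hc2min : c2min = Finset.univ.inf' Finset.univ_nonempty c2)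
    (hcap : cmax ≤ v * w * θ / (v + w))
    (a : ℝ) (ha : 0 ≤ a)
    (q1low q2low : ℝ)
    (hq1low : q1low = min (a / v) (cmax / v))
    (hq2low : q2low = min q1low (c1min / v)) :
    ∀ (i : I) (q1 : ℝ), q1low ≤ q1 →
      min (v * q2low) (c2 i) ≤ min (v * q1) (min (c1 i) (w * (θ - q2low))) := by
  intro i q1 hq1
  have hvw : 0 < v + w := by linarith
  have h1 : min (v * q2low) (c2 i) ≤ v * q2low := min_le_left _ _
  refine le_trans h1 (le_min ?_ (le_min ?_ ?_))
  · have h2 : q2low ≤ q1 := le_trans (hq2low ▸ min_le_left _ _) hq1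
    nlinarith
  · -- v * q2low ≤ c1 i
    have h2 : q2low ≤ c1min / v := hq2low ▸ min_le_right _ _
    have h3 : c1min ≤ c1 i := hc1min ▸ Finset.inf'_le _ (Finset.mem_univ i)
    have h4 : v * q2low ≤ c1min := by
      have := mul_le_mul_of_nonneg_left h2 (le_of_lt hv)
      calc v * q2low ≤ v * (c1min / v) := this
        _ = c1min := by field_simp
    linarith
  · -- v * q2low ≤ w * (θ - q2low)
    have h2 : q2low ≤ cmax / v := hq2low ▸ le_trans (min_le_left _ _) (hq1low ▸ min_le_right _ _)
    have h3 : v * q2low ≤ cmax := by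
      have := mul_le_mul_of_nonneg_left h2 (le_of_lt hv)
      calc v * q2low ≤ v * (cmax / v) := this
        _ = cmax := by field_simp
    have h4 : v * q2low ≤ v * w * θ / (v + w) := le_trans h3 hcap
    have h5 : v * q2low * (v + w) ≤ v * w * θ := by
      have := mul_le_mul_of_nonneg_right h4 (le_of_lt hvw)
      calc v * q2low * (v + w) ≤ v * w * θ / (v + w) * (v + w) := this
        _ = v * w * θ := by field_simp
    nlinarith
end

section
/- In the tandem fluid queue setting, for every mode i ∈ I and every q1 ∈ ℝ, min(v·q1, c1(i), w·(θ − q2up)) ≤ min(v·q2up, c2(i)); equivalently, the downstream drift f12(i, (q1, q2up)) − f2(i, (q1, q2up)) is nonpositive on the upper q2-boundary of the invariant set. -/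
/-!
On `q2 = θ - c2min / w` the congestion bound `w * (θ - q2)` on the inflow equals `c2min`,
which is at most the capacity `c2 i` of every mode. It is also at most the free-flow
outflow `v * q2`: that is the inequality `c ≤ v * (θ - c / w)`, which rearranges to
`c * (v + w) ≤ v * w * θ`, i.e. to `c` lying below the critical capacity `v w θ / (v + w)`.
-/

theorem le_mul_sub_div_of_le_mul_mul_div_add {v w θ c : ℝ} (hv : 0 < v) (hw : 0 < w)
    (hc : c ≤ v * w * θ / (v + w)) : c ≤ v * (θ - c / w) := by
  rw [le_div_iff₀ (add_pos hv hw)] at hc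
  rw [mul_sub, mul_div_assoc', le_sub_iff_add_le, ← le_sub_iff_add_le', div_le_iff₀ hw]
  linarith

theorem inf'_le_sup'_max {ι α : Type*} [LinearOrder α] {s : Finset ι} (hs : s.Nonempty)
    (f g : ι → α) {i : ι} (hi : i ∈ s) : s.inf' hs g ≤ s.sup' hs (fun j => max (f j) (g j)) :=
  calc s.inf' hs g ≤ g i := Finset.inf'_le g hi
    _ ≤ max (f i) (g i) := le_max_right _ _
    _ ≤ s.sup' hs (fun j => max (f j) (g j)) := Finset.le_sup' (fun j => max (f j) (g j)) hi

theorem tandem_upper_q2_boundary_general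
    {I : Type*} [Fintype I] [Nonempty I]
    (v w θ : ℝ) (hv : 0 < v) (hw : 0 < w)
    (c1 c2 : I → ℝ)
    (cmax c2min : ℝ)
    (hcmax : cmax = Finset.univ.sup' Finset.univ_nonempty (fun i => max (c1 i) (c2 i)))
    (hc2min : c2min = Finset.univ.inf' Finset.univ_nonempty c2)
    (hcap : cmax ≤ v * w * θ / (v + w))
    (q2up : ℝ) (hq2up : q2up = θ - c2min / w) :
    ∀ (i : I) (q1 : ℝ),
      min (v * q1) (min (c1 i) (w * (θ - q2up))) ≤ min (v * q2up) (c2 i) := by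
  intro i q1
  have hc2min_le : c2min ≤ c2 i := hc2min ▸ Finset.inf'_le c2 (Finset.mem_univ i)
  have hc2min_le_cmax : c2min ≤ cmax :=
    hcmax ▸ hc2min ▸ inf'_le_sup'_max Finset.univ_nonempty c1 c2 (Finset.mem_univ i)
  have hcongestion : w * (θ - q2up) = c2min := by
    rw [hq2up, sub_sub_cancel, mul_div_cancel₀ _ hw.ne']
  have hfree_flow : c2min ≤ v * q2up :=
    hq2up ▸ le_mul_sub_div_of_le_mul_mul_div_add hv hw (hc2min_le_cmax.trans hcap)
  have hinflow : min (v * q1) (min (c1 i) (w * (θ - q2up))) ≤ c2min :=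
    hcongestion ▸ (min_le_right _ _).trans (min_le_right _ _)
  exact le_min (hinflow.trans hfree_flow) (hinflow.trans hc2min_le)

/-- Third boundary inequality in the proof of Proposition 1 (tandem fluid queue):
on the upper `q2`-boundary `q2 = q2up = θ - c2min / w` of the invariant set, the
downstream drift `f12(i, (q1, q2up)) - f2(i, (q1, q2up))` is nonpositive for every
mode `i` and every `q1`. -/
theorem tandem_upper_q2_boundary
    {I : Type*} [Fintype I] [Nonempty I]
    (v w θ : ℝ) (hv : 0 < v) (hw : 0 < w) (hθ : 0 < θ)
    (c1 c2 : I → ℝ) (hc1 : ∀ i, 0 < c1 i) (hc2 : ∀ i, 0 < c2 i)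
    (cmax c2min : ℝ)
    (hcmax : cmax = Finset.univ.sup' Finset.univ_nonempty (fun i => max (c1 i) (c2 i)))
    (hc2min : c2min = Finset.univ.inf' Finset.univ_nonempty c2)
    (hcap : cmax ≤ v * w * θ / (v + w))
    (q2up : ℝ) (hq2up : q2up = θ - c2min / w) :
    ∀ (i : I) (q1 : ℝ),
      min (v * q1) (min (c1 i) (w * (θ - q2up))) ≤ min (v * q2up) (c2 i) :=
  tandem_upper_q2_boundary_general v w θ hv hw c1 c2 cmax c2min hcmax hc2min hcap q2up hq2up
end

section
/- Let I be a finite nonempty mode set, c1, c2 : I → ℝ nonnegative, p : I → ℝ nonnegative, and a ≥ 0 a constant. Let σ : [0,∞) → I be measurable with (1/t)·∫₀ᵗ 1{σ(τ)=i} dτ → p(i) as t → ∞ for every i ∈ I. Let f12, f2 : [0,∞) → ℝ be measurable with 0 ≤ f12(τ) ≤ c1(σ(τ)) and 0 ≤ f2(τ) ≤ c2(σ(τ)) for almost every τ. Suppose the queue lengths Q1(t) = Q1(0) + ∫₀ᵗ (a − f12(τ)) dτ and Q2(t) = Q2(0) + ∫₀ᵗ (f12(τ) − f2(τ)) dτ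 satisfy Q1(t)/t → 0 and Q2(t)/t → 0 as t → ∞. Then a ≤ Σ_{i∈I} p(i)·c1(i) and a ≤ Σ_{i∈I} p(i)·c2(i). -/
open MeasureTheory Filter Set Topology

/-!
Dividing the queue equations by `t`, sublinear growth of `Q₁` says that the average flow
through link 1 tends to `a`, and then sublinear growth of `Q₂` says the same for link 2. Each
flow is dominated by its capacity `c (σ τ) = ∑ i, 1{σ τ = i} c i`, whose average tends to
`∑ i, p i * c i` by the occupation-time hypothesis; passing to the limit in the inequality
between averages gives the bound.
-/

noncomputable def timeAvg (g : ℝ → ℝ) (t : ℝ) : ℝ :=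
  (1 / t) * ∫ τ in Ioc 0 t, g τ

lemma ae_restrict_Ioc_of_ae_restrict_Ici {P : ℝ → Prop}
    (h : ∀ᵐ τ ∂volume.restrict (Ici 0), P τ) (t : ℝ) :
    ∀ᵐ τ ∂volume.restrict (Ioc 0 t), P τ :=
  ae_restrict_of_ae_restrict_of_subset (fun _ hτ => le_of_lt hτ.1) h

lemma integrableOn_Ioc_of_ae_norm_le {g : ℝ → ℝ} (hg : Measurable g) {C : ℝ}
    (hC : ∀ᵐ τ ∂volume.restrict (Ici 0), ‖g τ‖ ≤ C) (t : ℝ) :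
    IntegrableOn g (Ioc 0 t) :=
  Measure.integrableOn_of_bounded (by simp) hg.aestronglyMeasurable
    (ae_restrict_Ioc_of_ae_restrict_Ici hC t)

lemma tendsto_timeAvg_const (a : ℝ) : Tendsto (timeAvg fun _ => a) atTop (𝓝 a) := by
  refine tendsto_const_nhds.congr' ((eventually_gt_atTop 0).mono fun t ht => ?_)
  rw [timeAvg, setIntegral_const, Real.volume_real_Ioc_of_le ht.le, smul_eq_mul]
  field_simp
  ring

lemma tendsto_timeAvg_of_tendsto_queue_div {u v : ℝ → ℝ} {a Q₀ : ℝ}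
    (hu : ∀ t, IntegrableOn u (Ioc 0 t)) (hv : ∀ t, IntegrableOn v (Ioc 0 t))
    (hua : Tendsto (timeAvg u) atTop (𝓝 a))
    (hQ : Tendsto (fun t => (Q₀ + ∫ τ in Ioc 0 t, (u τ - v τ)) / t) atTop (𝓝 0)) :
    Tendsto (timeAvg v) atTop (𝓝 a) := by
  have hv_eq : timeAvg v =
      fun t => Q₀ / t + timeAvg u t - (Q₀ + ∫ τ in Ioc 0 t, (u τ - v τ)) / t := by
    funext t
    rw [integral_sub (hu t) (hv t), timeAvg, timeAvg]
    ring
  rw [hv_eq]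
  simpa using ((tendsto_const_nhds.div_atTop tendsto_id).add hua).sub hQ

lemma le_of_tendsto_timeAvg_of_ae_le {f g : ℝ → ℝ} {a b : ℝ}
    (hf : ∀ t, IntegrableOn f (Ioc 0 t)) (hg : ∀ t, IntegrableOn g (Ioc 0 t))
    (hfg : ∀ᵐ τ ∂volume.restrict (Ici 0), f τ ≤ g τ)
    (hfa : Tendsto (timeAvg f) atTop (𝓝 a)) (hgb : Tendsto (timeAvg g) atTop (𝓝 b)) :
    a ≤ b :=
  le_of_tendsto_of_tendsto hfa hgb <| (eventually_ge_atTop 0).mono fun t ht =>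
    mul_le_mul_of_nonneg_left (setIntegral_mono_ae_restrict (hf t) (hg t)
      (ae_restrict_Ioc_of_ae_restrict_Ici hfg t)) (by positivity)

lemma integrableOn_Ioc_of_ae_le_comp {ι : Type*} [Fintype ι] {σ : ℝ → ι} {f : ℝ → ℝ}
    (hf : Measurable f) (c : ι → ℝ)
    (hb : ∀ᵐ τ ∂volume.restrict (Ici 0), 0 ≤ f τ ∧ f τ ≤ c (σ τ)) (t : ℝ) :
    IntegrableOn f (Ioc 0 t) :=
  integrableOn_Ioc_of_ae_norm_le hf (C := ‖c‖) (hb.mono fun τ h => by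
    rw [Real.norm_eq_abs, abs_of_nonneg h.1]
    exact h.2.trans ((le_abs_self _).trans (norm_le_pi_norm c (σ τ)))) t

section Switching

variable {ι : Type*} [Fintype ι] [DecidableEq ι] [MeasurableSpace ι]
  [MeasurableSingletonClass ι] {σ : ℝ → ι}

lemma tendsto_timeAvg_comp_of_tendsto_occupation (hσ : Measurable σ) (c p : ι → ℝ)
    (hfrac : ∀ i, Tendsto (timeAvg fun τ => if σ τ = i then (1 : ℝ) else 0)
      atTop (𝓝 (p i))) :
    Tendsto (timeAvg fun τ => c (σ τ)) atTop (𝓝 (∑ i, p i * c i)) := by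
  have hind : ∀ i t, IntegrableOn (fun τ => if σ τ = i then (1 : ℝ) else 0) (Ioc 0 t) :=
    fun i => integrableOn_Ioc_of_ae_norm_le (C := 1)
      (measurable_const.ite (hσ (measurableSet_singleton i)) measurable_const)
      (ae_of_all _ fun τ => by split_ifs <;> simp)
  have hexpand : timeAvg (fun τ => c (σ τ))
      = fun t => ∑ i, timeAvg (fun τ => if σ τ = i then (1 : ℝ) else 0) t * c i := by
    funext t
    have hcσ : ∀ τ, c (σ τ) = ∑ i, (if σ τ = i then (1 : ℝ) else 0) * c i := by simp
    simp only [timeAvg, hcσ, integral_finsetSum _ fun i _ => (hind i t).mul_const (c i),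
      integral_mul_const, Finset.mul_sum, mul_assoc]
  rw [hexpand]
  exact tendsto_finsetSum _ fun i _ => (hfrac i).mul_const (c i)

lemma le_sum_mul_of_tendsto_timeAvg (hσ : Measurable σ) (c p : ι → ℝ)
    (hfrac : ∀ i, Tendsto (timeAvg fun τ => if σ τ = i then (1 : ℝ) else 0)
      atTop (𝓝 (p i)))
    {f : ℝ → ℝ} (hf : Measurable f)
    (hb : ∀ᵐ τ ∂volume.restrict (Ici 0), 0 ≤ f τ ∧ f τ ≤ c (σ τ))
    {a : ℝ} (hfa : Tendsto (timeAvg f) atTop (𝓝 a)) :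
    a ≤ ∑ i, p i * c i :=
  le_of_tendsto_timeAvg_of_ae_le (integrableOn_Ioc_of_ae_le_comp hf c hb)
    (integrableOn_Ioc_of_ae_norm_le ((measurable_of_countable c).comp hσ)
      (ae_of_all _ fun τ => norm_le_pi_norm c (σ τ)))
    (hb.mono fun _ h => h.2) hfa (tendsto_timeAvg_comp_of_tendsto_occupation hσ c p hfrac)

end Switching

theorem tandem_queue_necessity_general
    {I : Type*} [Fintype I] [DecidableEq I]
    [MeasurableSpace I] [MeasurableSingletonClass I]
    (c1 c2 p : I → ℝ)
    (a : ℝ)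
    (σ : ℝ → I) (hσ : Measurable σ)
    (hfrac : ∀ i : I, Tendsto
      (fun t : ℝ => (1 / t) * ∫ τ in Set.Ioc (0 : ℝ) t, (if σ τ = i then (1 : ℝ) else 0))
      atTop (nhds (p i)))
    (f12 f2 : ℝ → ℝ) (hf12 : Measurable f12) (hf2 : Measurable f2)
    (hbound : ∀ᵐ τ ∂(volume.restrict (Set.Ici (0 : ℝ))),
      (0 ≤ f12 τ ∧ f12 τ ≤ c1 (σ τ)) ∧ (0 ≤ f2 τ ∧ f2 τ ≤ c2 (σ τ)))
    (Q10 Q20 : ℝ)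
    (hQ1 : Tendsto
      (fun t : ℝ => (Q10 + ∫ τ in Set.Ioc (0 : ℝ) t, (a - f12 τ)) / t)
      atTop (nhds 0))
    (hQ2 : Tendsto
      (fun t : ℝ => (Q20 + ∫ τ in Set.Ioc (0 : ℝ) t, (f12 τ - f2 τ)) / t)
      atTop (nhds 0)) :
    a ≤ ∑ i : I, p i * c1 i ∧ a ≤ ∑ i : I, p i * c2 i := by
  have hb12 := hbound.mono fun _ h => h.1
  have hb2 := hbound.mono fun _ h => h.2
  have hint12 := integrableOn_Ioc_of_ae_le_comp hf12 c1 hb12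
  have hint2 := integrableOn_Ioc_of_ae_le_comp hf2 c2 hb2
  have hflow12 : Tendsto (timeAvg f12) atTop (𝓝 a) :=
    tendsto_timeAvg_of_tendsto_queue_div (fun _ => integrableOn_const (by simp)) hint12
      (tendsto_timeAvg_const a) hQ1
  have hflow2 : Tendsto (timeAvg f2) atTop (𝓝 a) :=
    tendsto_timeAvg_of_tendsto_queue_div hint12 hint2 hflow12 hQ2
  exact ⟨le_sum_mul_of_tendsto_timeAvg hσ c1 p hfrac hf12 hb12 hflow12,
    le_sum_mul_of_tendsto_timeAvg hσ c2 p hfrac hf2 hb2 hflow2⟩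

/-- Pathwise core of the necessity direction of Theorem 2 (tandem fluid queue):
if both queue lengths grow sublinearly, the flows are nonnegative and bounded by
the mode-dependent capacities, and the switching signal spends asymptotic time
fraction `p i` in mode `i`, then the inflow rate `a` is bounded by the
time-averaged capacity of each link. -/
theorem tandem_queue_necessity
    {I : Type*} [Fintype I] [Nonempty I] [DecidableEq I]
    [MeasurableSpace I] [MeasurableSingletonClass I]
    (c1 c2 p : I → ℝ) (hc1 : ∀ i, 0 ≤ c1 i) (hc2 : ∀ i, 0 ≤ c2 i)
    (hp : ∀ i, 0 ≤ p i)
    (a : ℝ) (ha : 0 ≤ a)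
    (σ : ℝ → I) (hσ : Measurable σ)
    (hfrac : ∀ i : I, Tendsto
      (fun t : ℝ => (1 / t) * ∫ τ in Set.Ioc (0 : ℝ) t, (if σ τ = i then (1 : ℝ) else 0))
      atTop (nhds (p i)))
    (f12 f2 : ℝ → ℝ) (hf12 : Measurable f12) (hf2 : Measurable f2)
    (hbound : ∀ᵐ τ ∂(volume.restrict (Set.Ici (0 : ℝ))),
      (0 ≤ f12 τ ∧ f12 τ ≤ c1 (σ τ)) ∧ (0 ≤ f2 τ ∧ f2 τ ≤ c2 (σ τ)))
    (Q10 Q20 : ℝ)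
    (hQ1 : Tendsto
      (fun t : ℝ => (Q10 + ∫ τ in Set.Ioc (0 : ℝ) t, (a - f12 τ)) / t)
      atTop (nhds 0))
    (hQ2 : Tendsto
      (fun t : ℝ => (Q20 + ∫ τ in Set.Ioc (0 : ℝ) t, (f12 τ - f2 τ)) / t)
      atTop (nhds 0)) :
    a ≤ ∑ i : I, p i * c1 i ∧ a ≤ ∑ i : I, p i * c2 i :=
  tandem_queue_necessity_general c1 c2 p a σ hσ hfrac f12 f2 hf12 hf2 hbound Q10 Q20 hQ1 hQ2
end

section
/- In the tandem fluid queue setting, assume additionally q2low ≤ q2up, and set qc = cmax/v. For every mode i ∈ I, the infimum over the set Q̃1 = [qc, ∞) × [q2low, q2up] of the function g(q) = min(v·q1, c1(i), w·(θ − q2)) + min(v·q2, c2(i)) is attained and equals min( g(qc, q2low), g(qc, q2up) ). -/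
/-- From the proof of Theorem 2 (tandem fluid queue): the infimum of the total
throughput `g(q) = f12(i,q) + f2(i,q)` over the unbounded box
`Q̃1 = [qc, ∞) × [q2low, q2up]` is attained and equals the minimum of the values
at the two corner points `(qc, q2low)` and `(qc, q2up)`. -/
theorem tandem_throughput_corner_min
    {I : Type*} [Fintype I] [Nonempty I]
    (v w θ : ℝ) (hv : 0 < v) (hw : 0 < w) (hθ : 0 < θ)
    (c1 c2 : I → ℝ) (hc1 : ∀ i, 0 < c1 i) (hc2 : ∀ i, 0 < c2 i)
    (cmax c1min c2min : ℝ)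
    (hcmax : cmax = Finset.univ.sup' Finset.univ_nonempty (fun i => max (c1 i) (c2 i)))
    (hc1min : c1min = Finset.univ.inf' Finset.univ_nonempty c1)
    (hc2min : c2min = Finset.univ.inf' Finset.univ_nonempty c2)
    (hcap : cmax ≤ v * w * θ / (v + w))
    (a : ℝ) (ha : 0 ≤ a)
    (q1low q2low q2up qc : ℝ)
    (hq1low : q1low = min (a / v) (cmax / v))
    (hq2low : q2low = min q1low (c1min / v))
    (hq2up : q2up = θ - c2min / w)
    (hne : q2low ≤ q2up)
    (hqc : qc = cmax / v)
    (g : I → ℝ × ℝ → ℝ)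
    (hg : ∀ (i : I) (q : ℝ × ℝ),
      g i q = min (v * q.1) (min (c1 i) (w * (θ - q.2))) + min (v * q.2) (c2 i)) :
    ∀ i : I,
      IsLeast ((g i) '' (Set.Ici qc ×ˢ Set.Icc q2low q2up))
        (min (g i (qc, q2low)) (g i (qc, q2up))) := by

  intro i
  have hvqc : v * qc = cmax := by
    rw [hqc]; field_simp
  have hc1le : c1 i ≤ cmax := by
    rw [hcmax]
    exact le_trans (le_max_left (c1 i) (c2 i))
      (Finset.le_sup' (fun i => max (c1 i) (c2 i)) (Finset.mem_univ i))
  constructor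
  · rcases le_total (g i (qc, q2low)) (g i (qc, q2up)) with h | h
    · rw [min_eq_left h]
      exact ⟨(qc, q2low), ⟨le_refl qc, le_refl _, hne⟩, rfl⟩
    · rw [min_eq_right h]
      exact ⟨(qc, q2up), ⟨le_refl qc, hne, le_refl _⟩, rfl⟩
  · rintro x ⟨⟨q1, q2⟩, ⟨hq1, hq2l, hq2u⟩, rfl⟩
    simp only [Set.mem_Ici] at hq1
    simp only [hg]
    -- simplify the first min everywhere
    have hsimp : ∀ p : ℝ, qc ≤ p → ∀ s : ℝ,
        min (v * p) (min (c1 i) s) = min (c1 i) s := by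
      intro p hp s
      apply min_eq_right
      calc min (c1 i) s ≤ c1 i := min_le_left _ _
        _ ≤ cmax := hc1le
        _ = v * qc := hvqc.symm
        _ ≤ v * p := mul_le_mul_of_nonneg_left hp hv.le
    rw [hsimp q1 hq1, hsimp qc le_rfl, hsimp qc le_rfl]
    set L := min (c1 i) (w * (θ - q2low)) + min (v * q2low) (c2 i) with hL
    set U := min (c1 i) (w * (θ - q2up)) + min (v * q2up) (c2 i) with hU
    have hLl : L ≤ c1 i + v * q2low :=
      add_le_add (min_le_left _ _) (min_le_left _ _)
    have hLc : L ≤ c1 i + c2 i :=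
      add_le_add (min_le_left _ _) (min_le_right _ _)
    have hL3 : L ≤ w * (θ - q2low) + v * q2low :=
      add_le_add (min_le_right _ _) (min_le_left _ _)
    have hU4 : U ≤ w * (θ - q2up) + c2 i :=
      add_le_add (min_le_right _ _) (min_le_right _ _)
    have hU3 : U ≤ w * (θ - q2up) + v * q2up :=
      add_le_add (min_le_right _ _) (min_le_left _ _)
    rcases le_total (c1 i) (w * (θ - q2)) with h1 | h1 <;>
      rcases le_total (v * q2) (c2 i) with h2 | h2
    · -- f1 = c1 + v q2
      rw [min_eq_left h1, min_eq_left h2]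
      refine le_trans (min_le_left _ _) ?_
      have h := mul_le_mul_of_nonneg_left hq2l hv.le
      linarith
    · -- f2 = c1 + c2
      rw [min_eq_left h1, min_eq_right h2]
      exact le_trans (min_le_left _ _) hLc
    · -- f3 = w(θ-q2) + v q2
      rw [min_eq_right h1, min_eq_left h2]
      rcases le_total w v with hvw | hvw
      · refine le_trans (min_le_left _ _) ?_
        have h := mul_le_mul_of_nonneg_left hq2l (by linarith : (0:ℝ) ≤ v - w)
        have h' : (v - w) * q2low ≤ (v - w) * q2 := h
        nlinarith [h']
      · refine le_trans (min_le_right _ _) ?_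
        have h : (w - v) * q2 ≤ (w - v) * q2up :=
          mul_le_mul_of_nonneg_left hq2u (by linarith : (0:ℝ) ≤ w - v)
        nlinarith [h]
    · -- f4 = w(θ-q2) + c2
      rw [min_eq_right h1, min_eq_right h2]
      refine le_trans (min_le_right _ _) ?_
      have h := mul_le_mul_of_nonneg_left (by linarith : θ - q2up ≤ θ - q2) hw.le
      linarith
end

section
/- In the tandem fluid queue setting, assume q2low ≤ q2up and set qc = cmax/v, Q̃1 = [qc, ∞) × [q2low, q2up], and F1(i) = inf over q ∈ Q̃1 of (f12(i,q) + f2(i,q)). Let λ : I × I → ℝ satisfy λ(i,j) ≥ 0 for i ≠ j and Σ_{j∈I} λ(i,j) = 0 for every i, let α : I → ℝ be positive, and let β > 0. Define V(i,q) = α(i)·exp(β·(2·q1 + q2)) and L V(i,q) = [α(i)·β·(2a − f12(i,q) − f2(i,q)) + Σ_{j∈I} λ(i,j)·α(j)]·exp(β·(2·q1 + q2)). If for every i ∈ I, α(i)·β·(2a − F1(i)) + Σ_{j∈I} λ(i,j)·α(j) ≤ −1, then for every i ∈ I and every q ∈ Q̃1, L V(i,q) ≤ −(1/max_{j∈I}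 α(j))·V(i,q). -/
/-- Core of the sufficiency direction of Theorem 2 (tandem fluid queue): the
bilinear condition `α(i)·β·(2a − F1(i)) + Σ_j λ(i,j)·α(j) ≤ −1` implies the
Foster–Lyapunov drift condition `L V ≤ −(1/max_j α(j))·V` on
`Q̃1 = [qc, ∞) × [q2low, q2up]`, for the exponential Lyapunov function
`V(i,q) = α(i)·exp(β·(2q1 + q2))`. -/
theorem tandem_drift_condition_Q1
    {I : Type*} [Fintype I] [Nonempty I]
    (v w θ : ℝ) (hv : 0 < v) (hw : 0 < w) (hθ : 0 < θ)
    (c1 c2 : I → ℝ) (hc1 : ∀ i, 0 < c1 i) (hc2 : ∀ i, 0 < c2 i)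
    (cmax c1min c2min : ℝ)
    (hcmax : cmax = Finset.univ.sup' Finset.univ_nonempty (fun i => max (c1 i) (c2 i)))
    (hc1min : c1min = Finset.univ.inf' Finset.univ_nonempty c1)
    (hc2min : c2min = Finset.univ.inf' Finset.univ_nonempty c2)
    (hcap : cmax ≤ v * w * θ / (v + w))
    (a : ℝ) (ha : 0 ≤ a)
    (q1low q2low q2up qc : ℝ)
    (hq1low : q1low = min (a / v) (cmax / v))
    (hq2low : q2low = min q1low (c1min / v))
    (hq2up : q2up = θ - c2min / w)
    (hne : q2low ≤ q2up)
    (hqc : qc = cmax / v)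
    (f12 f2 : I → ℝ × ℝ → ℝ)
    (hf12 : ∀ (i : I) (q : ℝ × ℝ),
      f12 i q = min (v * q.1) (min (c1 i) (w * (θ - q.2))))
    (hf2 : ∀ (i : I) (q : ℝ × ℝ), f2 i q = min (v * q.2) (c2 i))
    (F1 : I → ℝ)
    (hF1 : ∀ i : I, F1 i =
      sInf ((fun q : ℝ × ℝ => f12 i q + f2 i q) ''
        (Set.Ici qc ×ˢ Set.Icc q2low q2up)))
    (lam : I → I → ℝ)
    (hlam_off : ∀ i j : I, i ≠ j → 0 ≤ lam i j)
    (hlam_row : ∀ i : I, ∑ j : I, lam i j = 0)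
    (α : I → ℝ) (hα : ∀ i, 0 < α i) (β : ℝ) (hβ : 0 < β)
    (V LV : I → ℝ × ℝ → ℝ)
    (hV : ∀ (i : I) (q : ℝ × ℝ),
      V i q = α i * Real.exp (β * (2 * q.1 + q.2)))
    (hLV : ∀ (i : I) (q : ℝ × ℝ),
      LV i q = (α i * β * (2 * a - f12 i q - f2 i q) + ∑ j : I, lam i j * α j) *
        Real.exp (β * (2 * q.1 + q.2)))
    (hbilinear : ∀ i : I,
      α i * β * (2 * a - F1 i) + ∑ j : I, lam i j * α j ≤ -1) :
    ∀ (i : I) (q : ℝ × ℝ), q ∈ Set.Ici qc ×ˢ Set.Icc q2low q2up →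
      LV i q ≤ -(1 / Finset.univ.sup' Finset.univ_nonempty α) * V i q := by

  intro i q hq
  have hq1 : qc ≤ q.1 := hq.1
  have hq2l : q2low ≤ q.2 := hq.2.1
  have hq2u : q.2 ≤ q2up := hq.2.2
  have hc1min_pos : 0 < c1min := by
    rw [hc1min]; exact (Finset.lt_inf'_iff _).2 fun j _ => hc1 j
  have hc2min_pos : 0 < c2min := by
    rw [hc2min]; exact (Finset.lt_inf'_iff _).2 fun j _ => hc2 j
  have hcmax_pos : 0 < cmax := by
    rw [hcmax]
    exact lt_of_lt_of_le (hc1 (Classical.arbitrary I))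
      (le_trans (le_max_left _ (c2 (Classical.arbitrary I)))
        (Finset.le_sup' (fun i => max (c1 i) (c2 i))
          (Finset.mem_univ (Classical.arbitrary I))))
  have hq2low_nonneg : 0 ≤ q2low := by
    rw [hq2low, hq1low]
    have h1 : 0 ≤ a / v := div_nonneg ha hv.le
    have h2 : 0 ≤ cmax / v := div_nonneg hcmax_pos.le hv.le
    have h3 : 0 ≤ c1min / v := div_nonneg hc1min_pos.le hv.le
    exact le_min (le_min h1 h2) h3
  -- lower bound 0 on the set
  have hlb : ∀ p ∈ Set.Ici qc ×ˢ Set.Icc q2low q2up, 0 ≤ f12 i p + f2 i p := by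
    intro p hp
    have hp1 : qc ≤ p.1 := hp.1
    have hp2l : q2low ≤ p.2 := hp.2.1
    have hp2u : p.2 ≤ q2up := hp.2.2
    have h12 : 0 ≤ f12 i p := by
      rw [hf12]
      have hvq : 0 ≤ v * p.1 := by
        have : 0 ≤ qc := by rw [hqc]; exact div_nonneg hcmax_pos.le hv.le
        nlinarith
      have hwq : 0 ≤ w * (θ - p.2) := by
        have : p.2 ≤ θ - c2min / w := hq2up ▸ hp2u
        have h2 : c2min / w ≤ θ - p.2 := by linarith
        nlinarith [(div_le_iff₀ hw).mp h2, hc2min_pos]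
      exact le_min hvq (le_min (hc1 i).le hwq)
    have h2 : 0 ≤ f2 i p := by
      rw [hf2]
      exact le_min (by nlinarith) (hc2 i).le
    linarith
  -- F1 i ≤ f12 i q + f2 i q
  have hmem : f12 i q + f2 i q ∈
      ((fun q : ℝ × ℝ => f12 i q + f2 i q) '' (Set.Ici qc ×ˢ Set.Icc q2low q2up)) :=
    Set.mem_image_of_mem _ hq
  have hF1le : F1 i ≤ f12 i q + f2 i q := by
    rw [hF1]
    exact csInf_le ⟨0, fun x ⟨p, hp, hpx⟩ => hpx ▸ hlb p hp⟩ hmem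
  -- the coefficient is ≤ -1
  have hcoef : α i * β * (2 * a - f12 i q - f2 i q) + ∑ j : I, lam i j * α j ≤ -1 := by
    have h1 : α i * β * (2 * a - f12 i q - f2 i q) ≤ α i * β * (2 * a - F1 i) := by
      have : (0:ℝ) ≤ α i * β := mul_nonneg (hα i).le hβ.le
      nlinarith
    linarith [hbilinear i]
  -- conclude
  rw [hLV, hV]
  set M := Finset.univ.sup' Finset.univ_nonempty α with hM
  have hMpos : 0 < M := lt_of_lt_of_le (hα (Classical.arbitrary I))
    (Finset.le_sup' _ (Finset.mem_univ (Classical.arbitrary I)))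
  have hαle : α i ≤ M := Finset.le_sup' _ (Finset.mem_univ i)
  have hE : 0 < Real.exp (β * (2 * q.1 + q.2)) := Real.exp_pos _
  have hratio : α i / M ≤ 1 := (div_le_one hMpos).mpr hαle
  have : α i * β * (2 * a - f12 i q - f2 i q) + ∑ j : I, lam i j * α j ≤ -(α i / M) := by
    linarith
  calc (α i * β * (2 * a - f12 i q - f2 i q) + ∑ j : I, lam i j * α j) *
        Real.exp (β * (2 * q.1 + q.2))
      ≤ -(α i / M) * Real.exp (β * (2 * q.1 + q.2)) :=
        mul_le_mul_of_nonneg_right this hE.le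
    _ = -(1 / M) * (α i * Real.exp (β * (2 * q.1 + q.2))) := by ring
end

section
/- In the merge fluid queue setting, let S be any subset of {(q1,q2,q3) ∈ ℝ³ : q1 + q2 > 0}, and let Fm : I → ℝ satisfy Fm(i) ≤ f13(i,q) + f23(i,q) + f3(i,q) for every i ∈ I and every q ∈ S. Let λ : I × I → ℝ satisfy λ(i,j) ≥ 0 for i ≠ j and Σ_{j∈I} λ(i,j) = 0 for every i, let α : I → ℝ be positive, and let β > 0. Define V(i,q) = α(i)·exp(β·(2·q1 + 2·q2 + q3)) and L V(i,q) = [α(i)·β·(2·a1 + 2·a2 − f13(i,q) − f23(i,q) − f3(i,q)) + Σ_{j∈I} λ(i,j)·α(j)]·exp(β·(2·q1 + 2·q2 + q3)). If for every i ∈ I, α(i)·β·(2·a1 + 2·a2 − Fm(i)) + Σ_{j∈I} λ(i,j)·α(j) ≤ −1, then for every i ∈ I and every q ∈ S, L V(i,q) ≤ −(1/max_{j∈I} α(j))·V(i,q). -/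
/-- Core of the sufficiency direction of Theorem 3 (merge fluid queue): if
`Fm(i)` lower-bounds the total throughput `f13 + f23 + f3` on a set
`S ⊆ {q : q1 + q2 > 0}` and the bilinear condition
`α(i)·β·(2a1 + 2a2 − Fm(i)) + Σ_j λ(i,j)·α(j) ≤ −1` holds, then the
Foster–Lyapunov drift condition `L V ≤ −(1/max_j α(j))·V` holds on `S`, for the
exponential Lyapunov function `V(i,q) = α(i)·exp(β·(2q1 + 2q2 + q3))`. -/
theorem merge_drift_condition
    {I : Type*} [Fintype I] [Nonempty I]
    (v w θ : ℝ) (hv : 0 < v) (hw : 0 < w) (hθ : 0 < θ)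
    (c1 c2 c3 : I → ℝ)
    (hc1 : ∀ i, 0 < c1 i) (hc2 : ∀ i, 0 < c2 i) (hc3 : ∀ i, 0 < c3 i)
    (cmax : ℝ)
    (hcmax : cmax = Finset.univ.sup' Finset.univ_nonempty
      (fun i => max (c1 i) (max (c2 i) (c3 i))))
    (hcap : cmax ≤ v * w * θ / (v + w))
    (a1 a2 : ℝ) (ha1 : 0 ≤ a1) (ha2 : 0 ≤ a2)
    (f13 f23 f3 : I → ℝ × ℝ × ℝ → ℝ)
    (hf13 : ∀ (i : I) (q : ℝ × ℝ × ℝ),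
      f13 i q = min (v * q.1)
        (min (q.1 / (q.1 + q.2.1) * (w * (θ - q.2.2))) (c1 i)))
    (hf23 : ∀ (i : I) (q : ℝ × ℝ × ℝ),
      f23 i q = min (v * q.2.1)
        (min (q.2.1 / (q.1 + q.2.1) * (w * (θ - q.2.2))) (c2 i)))
    (hf3 : ∀ (i : I) (q : ℝ × ℝ × ℝ), f3 i q = min (v * q.2.2) (c3 i))
    (S : Set (ℝ × ℝ × ℝ)) (hS : S ⊆ {q : ℝ × ℝ × ℝ | 0 < q.1 + q.2.1})
    (Fm : I → ℝ)
    (hFm : ∀ (i : I), ∀ q ∈ S, Fm i ≤ f13 i q + f23 i q + f3 i q)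
    (lam : I → I → ℝ)
    (hlam_off : ∀ i j : I, i ≠ j → 0 ≤ lam i j)
    (hlam_row : ∀ i : I, ∑ j : I, lam i j = 0)
    (α : I → ℝ) (hα : ∀ i, 0 < α i) (β : ℝ) (hβ : 0 < β)
    (V LV : I → ℝ × ℝ × ℝ → ℝ)
    (hV : ∀ (i : I) (q : ℝ × ℝ × ℝ),
      V i q = α i * Real.exp (β * (2 * q.1 + 2 * q.2.1 + q.2.2)))
    (hLV : ∀ (i : I) (q : ℝ × ℝ × ℝ),
      LV i q = (α i * β * (2 * a1 + 2 * a2 - f13 i q - f23 i q - f3 i q)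
          + ∑ j : I, lam i j * α j) *
        Real.exp (β * (2 * q.1 + 2 * q.2.1 + q.2.2)))
    (hbilinear : ∀ i : I,
      α i * β * (2 * a1 + 2 * a2 - Fm i) + ∑ j : I, lam i j * α j ≤ -1) :
    ∀ (i : I), ∀ q ∈ S,
      LV i q ≤ -(1 / Finset.univ.sup' Finset.univ_nonempty α) * V i q := by
  intro i q hq
  rw [hLV, hV]
  set M := Finset.univ.sup' Finset.univ_nonempty α with hM
  have hMpos : 0 < M := lt_of_lt_of_le (hα (Classical.arbitrary I))
    (Finset.le_sup' α (Finset.mem_univ _))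
  have hαM : α i ≤ M := Finset.le_sup' α (Finset.mem_univ i)
  have hexp : 0 < Real.exp (β * (2 * q.1 + 2 * q.2.1 + q.2.2)) := Real.exp_pos _
  have h1 : α i * β * (2 * a1 + 2 * a2 - f13 i q - f23 i q - f3 i q)
      + ∑ j : I, lam i j * α j ≤ -1 := by
    refine le_trans ?_ (hbilinear i)
    have := hFm i q hq
    have hαβ : 0 ≤ α i * β := le_of_lt (mul_pos (hα i) hβ)
    nlinarith
  have h2 : -1 ≤ -(α i / M) := by
    rw [neg_le_neg_iff]
    exact div_le_one_of_le₀ hαM (le_of_lt hMpos)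
  calc (α i * β * (2 * a1 + 2 * a2 - f13 i q - f23 i q - f3 i q)
          + ∑ j : I, lam i j * α j) * Real.exp (β * (2 * q.1 + 2 * q.2.1 + q.2.2))
      ≤ (-(α i / M)) * Real.exp (β * (2 * q.1 + 2 * q.2.1 + q.2.2)) :=
        mul_le_mul_of_nonneg_right (le_trans h1 h2) (le_of_lt hexp)
    _ = -(1 / M) * (α i * Real.exp (β * (2 * q.1 + 2 * q.2.1 + q.2.2))) := by ring
end
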